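/- Let X and Y be compact Hausdorff spaces and let φ : Y → X be a continuous map, inducing the unital *-homomorphism φ* : C(X) → C(Y), f ↦ f ∘ φ. Then φ* has real rank zero if and only if φ* factors through a commutative unital C*-algebra of real rank zero: that is, if and only if there exist a commutative unital C*-algebra D with real rank zero and unital *-homomorphisms α : C(X) → D and β : D → C(Y) such that φ* = β ∘ α. -/

import Mathlib

/-!
Both sides are equivalent to: every `f ∘ φ` is a uniform limit of continuous functions on `Y`
with finite range. If `φ*` has real rank zero, a projection from the hereditary subalgebra of
`(r ∘ φ - s)₊` (`r` real) is the indicator of a clopen set separating `{r ∘ φ ≤ s}` from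
`{r ∘ φ ≥ t}`; summing such indicators along a ladder of levels approximates `r ∘ φ`. Hence `φ*`
lands in the closure of the finite-range functions, a commutative C*-algebra of real rank zero.
Conversely, `β` maps a finite-spectrum approximant of `α f` to a finite-range approximant of
`f ∘ φ`. Thresholding a finite-range approximant of `a ≥ 0` cuts out a clopen set on which `a` is
bounded below and off which `a` is small, and its indicator is the projection required in
`cl(a C(Y) a)`.
-/

open Filter Topology
open scoped ComplexOrder

section Defs

variable {B : Type*} [NonUnitalNormedRing B] [StarRing B] [PartialOrder B]

/-- A projection in a C*-algebra: a self-adjoint idempotent. -/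
def IsProjection (p : B) : Prop := star p = p ∧ p * p = p

/-- The hereditary subalgebra `cl(a·S·a)`: the norm closure of `{a * b * a : b ∈ S}`. -/
def herSub (S : Set B) (a : B) : Set B := closure {x : B | ∃ b ∈ S, x = a * b * a}

/-- `T` has an approximate unit of projections. -/
def HasApproxUnitOfProjections (T : Set B) : Prop :=
  ∀ x ∈ T, 0 ≤ x → ∀ ε : ℝ, 0 < ε → ∃ p ∈ T, IsProjection p ∧ ‖p * x - x‖ < ε

/-- The inclusion `A ⊆ S` of C*-algebras has real rank zero. -/
def InclusionRealRankZero (A S : Set B) : Prop :=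
  ∀ a ∈ A, 0 ≤ a → a ≠ 0 → HasApproxUnitOfProjections (herSub S a)

end Defs

/-- A unital C*-algebra `D` (here, commutative) has real rank zero: every self-adjoint
element of `D` is a norm limit of self-adjoint elements of `D` with finite spectrum. -/
def UnitalRealRankZero (D : Type) (instD : CommCStarAlgebra D) : Prop :=
  letI := instD
  ∀ a : D, IsSelfAdjoint a → ∀ ε : ℝ, 0 < ε →
    ∃ b : D, IsSelfAdjoint b ∧ (spectrum ℂ b).Finite ∧ ‖a - b‖ ≤ ε

/-- `φ* : C(X) → C(Y)` factors through `D` via unital *-homomorphisms. -/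
def FactorsThroughAlg {X Y : Type} [TopologicalSpace X] [CompactSpace X] [T2Space X]
    [TopologicalSpace Y] [CompactSpace Y] [T2Space Y] (φ : C(Y, X))
    (D : Type) (instD : CommCStarAlgebra D) : Prop :=
  letI := instD
  ∃ (α : C(X, ℂ) →⋆ₐ[ℂ] D) (β : D →⋆ₐ[ℂ] C(Y, ℂ)), ∀ f : C(X, ℂ), β (α f) = f.comp φ

namespace ContinuousMap

variable {Y : Type*} [TopologicalSpace Y]

def ofReal (r : C(Y, ℝ)) : C(Y, ℂ) := ⟨fun y => r y, by fun_prop⟩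

@[simp]
lemma ofReal_apply (r : C(Y, ℝ)) (y : Y) : ofReal r y = r y := rfl

lemma isSelfAdjoint_ofReal (r : C(Y, ℝ)) : IsSelfAdjoint (ofReal r) := by
  ext y
  simp

end ContinuousMap

lemma comp_mem_of_forall_ofReal_comp_mem {X Y : Type*} [TopologicalSpace X] [TopologicalSpace Y]
    (φ : C(Y, X)) (S : StarSubalgebra ℂ C(Y, ℂ))
    (hS : ∀ r : C(X, ℝ), 0 ≤ r → ContinuousMap.ofReal (r.comp φ) ∈ S) (f : C(X, ℂ)) :
    f.comp φ ∈ S := by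
  have hreal (r : C(X, ℝ)) : ContinuousMap.ofReal (r.comp φ) ∈ S := by
    have : ContinuousMap.ofReal (r.comp φ) =
        .ofReal ((r ⊔ 0).comp φ) - .ofReal ((-r ⊔ 0).comp φ) := by
      ext y
      simp [← Complex.ofReal_sub]
    exact this ▸ sub_mem (hS _ le_sup_right) (hS _ le_sup_right)
  have : f.comp φ = .ofReal ((⟨fun x => (f x).re, by fun_prop⟩ : C(X, ℝ)).comp φ) +
      Complex.I • .ofReal ((⟨fun x => (f x).im, by fun_prop⟩ : C(X, ℝ)).comp φ) := by
    ext y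
    simp [mul_comm Complex.I]
  exact this ▸ add_mem (hreal _) (SMulMemClass.smul_mem _ (hreal _))

lemma finite_range_map₂ {Y α β γ : Type*} {f : Y → α} {g : Y → β} (op : α → β → γ)
    (hf : (Set.range f).Finite) (hg : (Set.range g).Finite) :
    (Set.range fun y => op (f y) (g y)).Finite :=
  (hf.image2 op hg).subset <| Set.range_subset_iff.2 fun y =>
    Set.mem_image2_of_mem (Set.mem_range_self y) (Set.mem_range_self y)

section CompactSpace

variable {Y : Type*} [TopologicalSpace Y] [CompactSpace Y]

lemma IsProjection.apply_eq_zero_or_one {p : C(Y, ℂ)} (hp : IsProjection p) (y : Y) :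
    p y = 0 ∨ p y = 1 :=
  IsIdempotentElem.iff_eq_zero_or_one.1 (congrArg (fun q : C(Y, ℂ) => q y) hp.2)

lemma apply_eq_zero_of_mem_herSub {S : Set C(Y, ℂ)} {a x : C(Y, ℂ)} (hx : x ∈ herSub S a)
    {y : Y} (hy : a y = 0) : x y = 0 := by
  refine closure_minimal ?_ (isClosed_eq (continuous_eval_const y) continuous_const) hx
  rintro _ ⟨b, -, rfl⟩
  simp [hy]

lemma exists_pos_forall_norm_lt {E F : Type*} [NormedAddCommGroup E] [NormedAddCommGroup F]
    {a : C(Y, E)} {x : C(Y, F)} (hx : ∀ y, a y = 0 → x y = 0) {ε : ℝ} (hε : 0 < ε) :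
    ∃ δ > 0, ∀ y, ‖a y‖ < δ → ‖x y‖ < ε := by
  have hK : IsCompact {y | ε ≤ ‖x y‖} := (isClosed_le (by fun_prop) (by fun_prop)).isCompact
  obtain ⟨δ, hδ, hδK⟩ := hK.exists_forall_le' (f := fun y => ‖a y‖) (by fun_prop) fun y hy =>
    norm_pos_iff.2 fun ha => by simp_all [hε.not_ge]
  exact ⟨δ, hδ, fun y hy => not_le.1 fun h => (hδK y h).not_gt hy⟩

lemma mem_herSub_of_isProjection {a P : C(Y, ℂ)} (ha : 0 ≤ a) (hP : IsProjection P)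
    (hPa : ∀ y, P y = 1 → a y ≠ 0) : P ∈ herSub Set.univ a := by
  -- `a + 1 - P` is invertible and `P * (a + 1 - P) = P * a`, so its inverse `u` gives
  -- `P = a * (P * u * u) * a`.
  have hunit : IsUnit (a + 1 - P) := by
    refine (ContinuousMap.isUnit_iff_forall_ne_zero _).2 fun y => ?_
    rcases hP.apply_eq_zero_or_one y with h | h
    · simpa [h] using (add_pos_of_nonneg_of_pos (ha y) one_pos).ne'
    · simpa [h] using hPa y h
  obtain ⟨u, hu⟩ := hunit.exists_right_inv
  refine subset_closure ⟨P * u * u, trivial, ?_⟩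
  linear_combination (-(1 + a * u) * P) * hu - (1 + a * u) * u * hP.2

lemma exists_isProjection_apply_eq_ite {c : C(Y, ℂ)} (hc : (Set.range c).Finite) (θ : ℝ) :
    ∃ P : C(Y, ℂ), IsProjection P ∧ ∀ y, P y = if θ < ‖c y‖ then 1 else 0 := by
  let g : ℂ → ℂ := fun z => if θ < ‖z‖ then 1 else 0
  refine ⟨⟨g ∘ c, (hc.continuousOn g).comp_continuous c.continuous Set.mem_range_self⟩,
    ⟨?_, ?_⟩, fun y => rfl⟩ <;> ext y <;> by_cases h : θ < ‖c y‖ <;> simp [g, h]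

lemma exists_isProjection_of_inclusionRealRankZero {A : Set C(Y, ℂ)}
    (H : InclusionRealRankZero A Set.univ) {h : C(Y, ℝ)} (h₀ : 0 ≤ h)
    (hA : ContinuousMap.ofReal h ∈ A) {η : ℝ} (hη : 0 < η) :
    ∃ p : C(Y, ℂ), IsProjection p ∧ (∀ y, η ≤ h y → p y = 1) ∧ ∀ y, h y = 0 → p y = 0 := by
  set a := ContinuousMap.ofReal h
  have ha : 0 ≤ a := fun y => by simpa [a] using h₀ y
  by_cases ha₀ : a = 0
  · refine ⟨0, ⟨star_zero _, mul_zero _⟩, fun y hy => ?_, fun _ _ => rfl⟩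
    have : h y = 0 := by simpa [a] using congrArg (· y) ha₀
    linarith
  obtain ⟨p, hp, hpr, hpa⟩ := H a hA ha ha₀ (a * a)
    (subset_closure ⟨1, trivial, by rw [mul_one]⟩) (fun y => mul_nonneg (ha y) (ha y))
    (η ^ 2) (by positivity)
  refine ⟨p, hpr, fun y hy => ?_, fun y hy => apply_eq_zero_of_mem_herSub hp (by simp [a, hy])⟩
  refine (hpr.apply_eq_zero_or_one y).resolve_left fun hp₀ => ?_
  have := ((p * (a * a) - a * a).norm_coe_le_norm y).trans_lt hpa
  simp only [ContinuousMap.sub_apply, ContinuousMap.mul_apply, hp₀, a,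
    ContinuousMap.ofReal_apply, zero_mul, zero_sub, norm_neg, norm_mul, Complex.norm_real,
    Real.norm_eq_abs] at this
  nlinarith [abs_of_nonneg (hη.le.trans hy)]

end CompactSpace

lemma sum_range_max_zero_min_sub_one (x : ℝ) (K : ℕ) :
    ∑ k ∈ Finset.range K, max 0 (min (x - k) 1) = max 0 (min x K) := by
  induction K with
  | zero => simp
  | succ K ih =>
    rw [Finset.sum_range_succ, ih]
    have : (0 : ℝ) ≤ K := K.cast_nonneg
    push_cast
    simp only [max_def, min_def]
    split_ifs <;> linarith

lemma abs_sub_sum_range_le_two {x : ℝ} {K : ℕ} (hx₀ : 0 ≤ x) (hxK : x ≤ K) {c : ℕ → ℝ}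
    (hc : ∀ k, 0 ≤ c k ∧ c k ≤ 1) (hc₁ : ∀ k : ℕ, k + 2 ≤ x → c k = 1)
    (hc₀ : ∀ k : ℕ, x ≤ k + 1 → c k = 0) : |x - ∑ k ∈ Finset.range K, c k| ≤ 2 := by
  -- `c k` is squeezed between the ramps `t ↦ max 0 (min (t - k) 1)` at `x - 2` and at `x`.
  have hle : ∑ k ∈ Finset.range K, c k ≤ ∑ k ∈ Finset.range K, max 0 (min (x - k) 1) := by
    refine Finset.sum_le_sum fun k _ => ?_
    rcases le_total x (k + 1) with h | h
    · simp [hc₀ k h]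
    · simp [(hc k).2, le_sub_iff_add_le', h]
  have hge : ∑ k ∈ Finset.range K, max 0 (min (x - 2 - k) 1) ≤ ∑ k ∈ Finset.range K, c k := by
    refine Finset.sum_le_sum fun k _ => ?_
    rcases le_total ((k : ℝ) + 2) x with h | h
    · rw [hc₁ k h]
      exact max_le zero_le_one (min_le_right _ _)
    · exact max_le (hc k).1 ((min_le_left _ _).trans (by linarith [(hc k).1]))
  rw [sum_range_max_zero_min_sub_one, min_eq_left hxK, max_eq_right hx₀] at hle
  rw [sum_range_max_zero_min_sub_one, min_eq_left (by linarith)] at hge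
  rw [abs_le]
  constructor <;> linarith [le_max_right 0 (x - 2)]

section FiniteRange

variable (Y : Type*) [TopologicalSpace Y] [CompactSpace Y]

noncomputable def finiteRangeSubalgebra : StarSubalgebra ℂ C(Y, ℂ) where
  carrier := {f | (Set.range f).Finite}
  mul_mem' hf hg := finite_range_map₂ (· * ·) hf hg
  add_mem' hf hg := finite_range_map₂ (· + ·) hf hg
  algebraMap_mem' c := (Set.finite_singleton c).subset <| Set.range_subset_iff.2 fun _ => rfl
  star_mem' hf := (hf.image star).subset <| Set.range_subset_iff.2 fun y => ⟨_, ⟨y, rfl⟩, rfl⟩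

noncomputable def finiteRangeClosure : StarSubalgebra ℂ C(Y, ℂ) :=
  (finiteRangeSubalgebra Y).topologicalClosure

instance : IsClosed (finiteRangeClosure Y : Set C(Y, ℂ)) := isClosed_closure

variable {Y} {X : Type*} [TopologicalSpace X]

lemma mem_finiteRangeSubalgebra {f : C(Y, ℂ)} :
    f ∈ finiteRangeSubalgebra Y ↔ (Set.range f).Finite := Iff.rfl

lemma mem_finiteRangeClosure {f : C(Y, ℂ)} :
    f ∈ finiteRangeClosure Y ↔ ∀ ε > 0, ∃ g ∈ finiteRangeSubalgebra Y, dist f g < ε :=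
  Metric.mem_closure_iff

lemma IsProjection.mem_finiteRangeSubalgebra {p : C(Y, ℂ)} (hp : IsProjection p) :
    p ∈ finiteRangeSubalgebra Y :=
  ((Set.finite_singleton 1).insert 0).subset <| Set.range_subset_iff.2 hp.apply_eq_zero_or_one

lemma inclusionRealRankZero_of_subset_finiteRangeClosure {A : Set C(Y, ℂ)}
    (hA : A ⊆ finiteRangeClosure Y) : InclusionRealRankZero A Set.univ := by
  intro a haA ha _ x hx _ ε hε
  obtain ⟨δ, hδ, hxδ⟩ :=
    exists_pos_forall_norm_lt (fun y => apply_eq_zero_of_mem_herSub hx) hε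
  obtain ⟨c, hc, hac⟩ := mem_finiteRangeClosure.1 (hA haA) (δ / 4) (by positivity)
  obtain ⟨P, hP, hPc⟩ := exists_isProjection_apply_eq_ite hc (δ / 2)
  have hac' (y : Y) : |‖a y‖ - ‖c y‖| < δ / 4 :=
    (abs_norm_sub_norm_le _ _).trans_lt ((dist_eq_norm (a y) (c y)) ▸
      (ContinuousMap.dist_apply_le_dist y).trans_lt hac)
  have hPa (y : Y) (hy : P y = 1) : a y ≠ 0 := by
    have hcy : δ / 2 < ‖c y‖ := by
      by_contra hcy
      simp [hPc, hcy] at hy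
    exact norm_pos_iff.1 (by linarith [abs_lt.1 (hac' y)])
  refine ⟨P, mem_herSub_of_isProjection ha hP hPa, hP,
    (ContinuousMap.norm_lt_iff _ hε).2 fun y => ?_⟩
  rcases hP.apply_eq_zero_or_one y with h | h
  · have hcy : ‖c y‖ ≤ δ / 2 := by
      by_contra hcy
      simp [hPc, not_le.1 hcy] at h
    simpa [h] using hxδ y (by linarith [abs_lt.1 (hac' y)])
  · simpa [h] using hε

lemma ofReal_mem_finiteRangeClosure {r : C(Y, ℝ)} (hr : 0 ≤ r)
    (hsep : ∀ s t, s < t → ∃ p : C(Y, ℂ), IsProjection p ∧ (∀ y, t ≤ r y → p y = 1) ∧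
      ∀ y, r y ≤ s → p y = 0) :
    ContinuousMap.ofReal r ∈ finiteRangeClosure Y := by
  refine mem_finiteRangeClosure.2 fun ε' hε' => ?_
  obtain ⟨ε, hε, rfl⟩ : ∃ ε > 0, ε' = 3 * ε := ⟨ε' / 3, by positivity, by ring⟩
  choose p hp hp₁ hp₀ using fun k : ℕ => hsep ((k + 1) * ε) ((k + 2) * ε) (by nlinarith)
  set K := ⌈‖r‖ / ε⌉₊
  refine ⟨∑ k ∈ Finset.range K, (ε : ℂ) • p k,
    sum_mem fun k _ => SMulMemClass.smul_mem _ (hp k).mem_finiteRangeSubalgebra, ?_⟩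
  rw [dist_eq_norm]
  refine ((ContinuousMap.norm_le _ (by positivity : 0 ≤ 2 * ε)).2 fun y => ?_).trans_lt
    (by linarith)
  set c : ℕ → ℝ := fun k => (p k y).re
  have hpc (k : ℕ) : p k y = c k := by
    rcases (hp k).apply_eq_zero_or_one y with h | h <;> simp [c, h]
  have hc (k : ℕ) : 0 ≤ c k ∧ c k ≤ 1 := by
    rcases (hp k).apply_eq_zero_or_one y with h | h <;> simp [c, h]
  have hc₁ (k : ℕ) (hk : (k : ℝ) + 2 ≤ r y / ε) : c k = 1 := by
    simp [c, hp₁ k y ((le_div_iff₀ hε).1 hk)]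
  have hc₀ (k : ℕ) (hk : r y / ε ≤ k + 1) : c k = 0 := by
    simp [c, hp₀ k y ((div_le_iff₀ hε).1 hk)]
  have hxK : r y / ε ≤ K := (div_le_div_of_nonneg_right
    ((Real.le_norm_self _).trans (r.norm_coe_le_norm y)) hε.le).trans (Nat.le_ceil _)
  have hval : (ContinuousMap.ofReal r - ∑ k ∈ Finset.range K, (ε : ℂ) • p k) y =
      ((ε * (r y / ε - ∑ k ∈ Finset.range K, c k) : ℝ) : ℂ) := by
    simp [hpc, mul_sub, mul_div_cancel₀ _ hε.ne', Finset.mul_sum]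
  rw [hval, Complex.norm_real, Real.norm_eq_abs, abs_mul, abs_of_pos hε, mul_comm]
  exact mul_le_mul_of_nonneg_right
    (abs_sub_sum_range_le_two (div_nonneg (hr y) hε.le) hxK hc hc₁ hc₀) hε.le

lemma ofReal_comp_mem_finiteRangeClosure_of_inclusionRealRankZero {φ : C(Y, X)}
    (H : InclusionRealRankZero (Set.range fun f : C(X, ℂ) => f.comp φ) Set.univ)
    {r : C(X, ℝ)} (hr : 0 ≤ r) : ContinuousMap.ofReal (r.comp φ) ∈ finiteRangeClosure Y := by
  refine ofReal_mem_finiteRangeClosure (fun y => hr (φ y)) fun s t hst => ?_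
  let h : C(X, ℝ) := ⟨fun x => max (r x - s) 0, by fun_prop⟩
  obtain ⟨p, hp, hp₁, hp₀⟩ := exists_isProjection_of_inclusionRealRankZero H
    (h := h.comp φ) (fun y => le_max_right _ _) ⟨.ofReal h, rfl⟩ (sub_pos.2 hst)
  refine ⟨p, hp, fun y hy => hp₁ y (le_max_of_le_left ?_), fun y hy => hp₀ y (max_eq_right ?_)⟩
  · simpa using sub_le_sub_right hy s
  · simpa using hy

end FiniteRange

section CStarAlgebra

variable {Y : Type} [TopologicalSpace Y] [CompactSpace Y]

open scoped ComplexStarModule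

lemma unitalRealRankZero_finiteRangeClosure :
    UnitalRealRankZero (finiteRangeClosure Y) inferInstance := by
  intro a ha ε hε
  obtain ⟨c, hc, hac⟩ := mem_finiteRangeClosure.1 a.2 ε hε
  have hc' : (ℜ c : C(Y, ℂ)) ∈ finiteRangeSubalgebra Y := by
    rw [realPart_apply_coe, ← Complex.coe_smul]
    exact SMulMemClass.smul_mem _ (add_mem hc (star_mem hc))
  refine ⟨⟨ℜ c, (finiteRangeSubalgebra Y).le_topologicalClosure hc'⟩,
    Subtype.ext (ℜ c).2.star_eq, ?_, ?_⟩
  · rw [StarSubalgebra.spectrum_eq, ContinuousMap.spectrum_eq_range]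
    exact hc'
  · have ha' : IsSelfAdjoint (a : C(Y, ℂ)) := ha.map (finiteRangeClosure Y).subtype
    change ‖(a : C(Y, ℂ)) - ℜ c‖ ≤ ε
    nth_rw 1 [← ha'.coe_realPart]
    rw [← AddSubgroupClass.coe_sub, ← map_sub]
    exact (realPart.norm_le _).trans (dist_eq_norm (a : C(Y, ℂ)) c ▸ hac).le

lemma ofReal_comp_mem_finiteRangeClosure_of_factorsThroughAlg {X : Type} [TopologicalSpace X]
    [CompactSpace X] [T2Space X] [T2Space Y] {φ : C(Y, X)} {D : Type} {instD : CommCStarAlgebra D}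
    (hD : UnitalRealRankZero D instD) (hφ : FactorsThroughAlg φ D instD) (r : C(X, ℝ)) :
    ContinuousMap.ofReal (r.comp φ) ∈ finiteRangeClosure Y := by
  let _ := instD
  obtain ⟨α, β, hαβ⟩ := hφ
  refine mem_finiteRangeClosure.2 fun ε hε => ?_
  obtain ⟨b, -, hb, hab⟩ := hD (α (.ofReal r)) ((ContinuousMap.isSelfAdjoint_ofReal r).map α)
    (ε / 2) (by positivity)
  refine ⟨β b, ?_, ?_⟩
  · rw [mem_finiteRangeSubalgebra, ← ContinuousMap.spectrum_eq_range]
    exact hb.subset (AlgHom.spectrum_apply_subset β b)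
  · calc dist (ContinuousMap.ofReal (r.comp φ)) (β b) = ‖β (α (.ofReal r) - b)‖ := by
          rw [map_sub, hαβ, dist_eq_norm]; rfl
      _ ≤ ‖α (.ofReal r) - b‖ := NonUnitalStarAlgHom.norm_apply_le β _
      _ < ε := by linarith

end CStarAlgebra

theorem stmt13 {X Y : Type} [TopologicalSpace X] [CompactSpace X] [T2Space X]
    [TopologicalSpace Y] [CompactSpace Y] [T2Space Y] (φ : C(Y, X)) :
    InclusionRealRankZero (Set.range fun f : C(X, ℂ) => f.comp φ)
        (Set.univ : Set C(Y, ℂ)) ↔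
      ∃ (D : Type) (instD : CommCStarAlgebra D),
        UnitalRealRankZero D instD ∧ FactorsThroughAlg φ D instD := by
  constructor
  · intro H
    have hφ (f : C(X, ℂ)) : f.comp φ ∈ finiteRangeClosure Y :=
      comp_mem_of_forall_ofReal_comp_mem φ _
        (fun _ hr => ofReal_comp_mem_finiteRangeClosure_of_inclusionRealRankZero H hr) f
    exact ⟨finiteRangeClosure Y, inferInstance, unitalRealRankZero_finiteRangeClosure,
      (ContinuousMap.compStarAlgHom' ℂ ℂ φ).codRestrict _ hφ, (finiteRangeClosure Y).subtype,
      fun _ => rfl⟩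
  · rintro ⟨D, instD, hD, hfac⟩
    refine inclusionRealRankZero_of_subset_finiteRangeClosure ?_
    rintro _ ⟨f, rfl⟩
    exact comp_mem_of_forall_ofReal_comp_mem φ _
      (fun r _ => ofReal_comp_mem_finiteRangeClosure_of_factorsThroughAlg hD hfac r) f
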